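/- Let A ∈ ℝ^{m×k}, B ∈ ℝ^{m×s}, and f satisfy the standard assumption. Define α([A,B]) = min over columns c of [A,B] of min_{x ∈ Δ} ‖c - ([A,B] without column c)·x‖₂ and ν(R_B^f(A)) = min_j ‖R_B^f(a_j)‖₂. Then ν(R_B^f(A)) ≥ α([A,B]). -/

import Mathlib

noncomputable section

open scoped BigOperators

abbrev E (m : ℕ) := EuclideanSpace ℝ (Fin m)

def toE {m : ℕ} (x : Fin m → ℝ) : E m := WithLp.toLp 2 x

/-- The unit simplex `Δ = {y | y ≥ 0, ∑ y ≤ 1}`. -/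
def simplex (n : Type*) [Fintype n] : Set (n → ℝ) :=
  {y | (∀ i, 0 ≤ y i) ∧ ∑ i, y i ≤ 1}

/-- Assumption 2 of the paper: `f` is `μ`-strongly convex with `L`-Lipschitz
gradient `f'`, and `0` is its global minimizer with `f 0 = 0`. -/
structure GoodF {m : ℕ} (f : E m → ℝ) (f' : E m → E m) (μ L : ℝ) : Prop where
  mu_pos : 0 < μ
  grad : ∀ x, HasGradientAt f (f' x) x
  lip : ∀ x y : E m, ‖f' x - f' y‖ ≤ L * ‖x - y‖
  sconv : ∀ x y : E m, ∀ δ : ℝ, 0 ≤ δ → δ ≤ 1 →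
    f (δ • x + (1 - δ) • y) ≤ δ * f x + (1 - δ) * f y - μ / 2 * δ * (1 - δ) * ‖x - y‖ ^ 2
  f_zero : f 0 = 0
  min_zero : ∀ x, f 0 ≤ f x

/-- A minimizer over the unit simplex of `y ↦ f (x - B y)` (chosen via choice). -/
def argminSimplex {m : ℕ} {n : Type*} [Fintype n] (f : E m → ℝ)
    (B : Matrix (Fin m) n ℝ) (x : E m) : n → ℝ :=
  Classical.epsilon fun y => y ∈ simplex n ∧
    ∀ z ∈ simplex n, f (x - toE (B.mulVec y)) ≤ f (x - toE (B.mulVec z))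

/-- The residual `R_B^f(x) = x - B y*` where `y* = argmin_{y ∈ Δ} f (x - B y)`. -/
def resid {m : ℕ} {n : Type*} [Fintype n] (f : E m → ℝ)
    (B : Matrix (Fin m) n ℝ) (x : E m) : E m :=
  x - toE (B.mulVec (argminSimplex f B x))

/-- Column-wise residual matrix `R_B^f(A)`. -/
def residMat {m : ℕ} {n k : Type*} [Fintype n] (f : E m → ℝ)
    (B : Matrix (Fin m) n ℝ) (A : Matrix (Fin m) k ℝ) : Matrix (Fin m) k ℝ :=
  fun i j => resid f B (toE fun i' => A i' j) i

/-- `‖N‖_{1,2}`: the maximum `ℓ₂` column norm. -/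
def norm12 {m : ℕ} {n : Type*} [Fintype n] (N : Matrix (Fin m) n ℝ) : ℝ :=
  sSup {c | ∃ j, c = ‖toE fun i => N i j‖}

/-- `α(W)`: minimum distance between a column of `W` and the convex hull of the
other columns of `W` and the origin. -/
def alpha {m r : ℕ} (W : Matrix (Fin m) (Fin r) ℝ) : ℝ :=
  sInf {c | ∃ (j : Fin r) (x : Fin r → ℝ), x ∈ simplex (Fin r) ∧ x j = 0 ∧
    c = ‖toE (fun i => W i j) - toE (W.mulVec x)‖}

/-- `σ(W)`: smallest singular value (`min_{‖z‖₂ ≥ 1} ‖Wz‖₂`) if `m ≥ r`, and `0` if `m < r`. -/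
def smin {m r : ℕ} (W : Matrix (Fin m) (Fin r) ℝ) : ℝ :=
  if r ≤ m then sInf {c | ∃ z : Fin r → ℝ, 1 ≤ ‖toE z‖ ∧ c = ‖toE (W.mulVec z)‖} else 0

/-- `[B, x]`: append the column `x` to `B`. -/
def appendCol {m s : ℕ} (B : Matrix (Fin m) (Fin s) ℝ) (x : E m) :
    Matrix (Fin m) (Fin (s + 1)) ℝ :=
  fun i => Fin.snoc (fun j => B i j) (x i)

/-- `[A, B]`: horizontal concatenation. -/
def appendMat {m k s : ℕ} (A : Matrix (Fin m) (Fin k) ℝ) (B : Matrix (Fin m) (Fin s) ℝ) :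
    Matrix (Fin m) (Fin (k + s)) ℝ :=
  fun i => Fin.append (fun j => A i j) (fun j => B i j)

/-- `ω(P) = min (min_i ‖p_i‖₂, (1/√2) min_{i ≠ j} ‖p_i - p_j‖₂)`. -/
def omegaM {m : ℕ} {k : Type*} [Fintype k] (P : Matrix (Fin m) k ℝ) : ℝ :=
  sInf ({c | ∃ i, c = ‖toE fun a => P a i‖} ∪
    {c | ∃ i j, i ≠ j ∧ c = (Real.sqrt 2)⁻¹ * ‖(toE fun a => P a i) - toE fun a => P a j‖})

/-- `β(W) = min (ν_β(W), γ_β(W)/√2)` as in the paper. -/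
def beta {m r : ℕ} (f : E m → ℝ) (W : Matrix (Fin m) (Fin r) ℝ) : ℝ :=
  sInf ({c | ∃ j : Fin r,
      c = ‖resid f (W.submatrix id fun p : {i // i ≠ j} => (p : Fin r)) (toE fun a => W a j)‖} ∪
    {c | ∃ (i j : Fin r) (J : Finset (Fin r)), i ≠ j ∧ i ∉ J ∧ j ∉ J ∧
      c = (Real.sqrt 2)⁻¹ *
        ‖resid f (W.submatrix id fun p : J => (p : Fin r)) (toE fun a => W a i) -
         resid f (W.submatrix id fun p : J => (p : Fin r)) (toE fun a => W a j)‖})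

/-- Singular values of `B` in nonincreasing order (`i`-th largest at index `i`). -/
def singVals {m s : ℕ} (B : Matrix (Fin m) (Fin s) ℝ) : Fin s → ℝ := fun i =>
  Real.sqrt (((Matrix.isHermitian_conjTranspose_mul_self B).eigenvalues ∘
    Tuple.sort (Matrix.isHermitian_conjTranspose_mul_self B).eigenvalues) i.rev)

/-- The spectral norm `‖N‖₂` (ℓ₂ operator norm). -/
def spec {m s : ℕ} (N : Matrix (Fin m) (Fin s) ℝ) : ℝ :=
  ‖LinearMap.toContinuousLinearMap (Matrix.toEuclideanLin N)‖

/-!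
Extending the minimizer `y*` of `y ↦ f (a_j - B y)` over `Δ` (it exists since `f` is continuous
and `Δ` compact) by zeros on the columns of `A` gives a point `x ∈ Δ` with `x_j = 0` and
`a_j - [A, B] x = R_B^f(a_j)`, so `‖R_B^f(a_j)‖` is one of the distances whose infimum is
`α([A, B])`.
-/

lemma isCompact_simplex (n : Type*) [Fintype n] : IsCompact (simplex n) := by
  have hsub : simplex n ⊆ Set.Icc 0 1 := fun y ⟨hnonneg, hsum⟩ =>
    ⟨hnonneg, fun i =>
      (Finset.single_le_sum (fun j _ => hnonneg j) (Finset.mem_univ i)).trans hsum⟩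
  have hclosed : IsClosed (simplex n) := by
    rw [simplex, Set.ofPred_and, Set.ofPred_forall]
    exact (isClosed_iInter fun i => isClosed_le continuous_const (continuous_apply i)).inter
        (isClosed_le (continuous_finsetSum _ fun i _ => continuous_apply i) continuous_const)
  exact isCompact_Icc.of_isClosed_subset hclosed hsub

lemma zero_mem_simplex (n : Type*) [Fintype n] : (0 : n → ℝ) ∈ simplex n :=
  ⟨fun _ => le_rfl, by simp⟩

lemma GoodF.continuous {m : ℕ} {f : E m → ℝ} {f' : E m → E m} {μ L : ℝ}
    (hf : GoodF f f' μ L) : Continuous f :=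
  continuous_iff_continuousAt.2 fun x => (hf.grad x).hasFDerivAt.continuousAt

lemma argminSimplex_mem_simplex {m : ℕ} {n : Type*} [Fintype n] {f : E m → ℝ}
    (hf : Continuous f) (B : Matrix (Fin m) n ℝ) (x : E m) :
    argminSimplex f B x ∈ simplex n := by
  have hcont : Continuous fun y : n → ℝ => f (x - toE (B.mulVec y)) :=
    hf.comp (continuous_const.sub ((PiLp.continuous_toLp 2 _).comp (Continuous.matrix_mulVec
      continuous_const continuous_id)))
  obtain ⟨y, hy, hmin⟩ := (isCompact_simplex n).exists_isMinOn ⟨0, zero_mem_simplex n⟩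
    hcont.continuousOn
  exact (Classical.epsilon_spec (p := fun y => y ∈ simplex n ∧
    ∀ z ∈ simplex n, f (x - toE (B.mulVec y)) ≤ f (x - toE (B.mulVec z)))
    ⟨y, hy, fun z hz => hmin hz⟩).1

lemma append_zero_mem_simplex {k s : ℕ} {y : Fin s → ℝ} (hy : y ∈ simplex (Fin s)) :
    Fin.append (0 : Fin k → ℝ) y ∈ simplex (Fin (k + s)) := by
  refine ⟨Fin.addCases (fun _ => by simp) (fun p => by simpa using hy.1 p), ?_⟩
  simpa [Fin.sum_univ_add] using hy.2

lemma appendMat_mulVec_append_zero {m k s : ℕ} (A : Matrix (Fin m) (Fin k) ℝ)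
    (B : Matrix (Fin m) (Fin s) ℝ) (y : Fin s → ℝ) :
    (appendMat A B).mulVec (Fin.append 0 y) = B.mulVec y := by
  funext i
  simp [Matrix.mulVec, dotProduct, Fin.sum_univ_add, appendMat]

lemma alpha_le {m r : ℕ} (W : Matrix (Fin m) (Fin r) ℝ) {j : Fin r} {x : Fin r → ℝ}
    (hx : x ∈ simplex (Fin r)) (hxj : x j = 0) :
    alpha W ≤ ‖toE (fun i => W i j) - toE (W.mulVec x)‖ :=
  csInf_le ⟨0, by rintro c ⟨-, -, -, -, rfl⟩; exact norm_nonneg _⟩ ⟨j, x, hx, hxj, rfl⟩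

theorem stmt5 (m k s : ℕ) (μ L : ℝ) (f : E m → ℝ) (f' : E m → E m) (hf : GoodF f f' μ L)
    (A : Matrix (Fin m) (Fin k) ℝ) (B : Matrix (Fin m) (Fin s) ℝ) :
    ∀ j : Fin k, alpha (appendMat A B) ≤ ‖resid f B (toE fun i => A i j)‖ := by
  intro j
  set y := argminSimplex f B (toE fun i => A i j)
  have hy : y ∈ simplex (Fin s) := argminSimplex_mem_simplex hf.continuous B _
  have hcol : (fun i => appendMat A B i (Fin.castAdd s j)) = fun i => A i j := by
    funext i
    simp [appendMat]
  have h := alpha_le (appendMat A B) (j := Fin.castAdd s j) (append_zero_mem_simplex hy)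
    (by simp)
  rwa [hcol, appendMat_mulVec_append_zero] at h
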